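/- Let f : ℝ → ℝ be differentiable, let Ω ⊆ ℝ² be open, and let ξ, θ : Ω → ℝ be twice differentiable functions of (t,x). Set η¹ = −ξ and η² = θ. Then for every (t,x) ∈ Ω and every p ∈ ℝ the following two expressions are equal: (ξξ_x p² − (ξ_xθ + ξθ_x)p + θθ_x)·f'(p) + ((ξ_t + 2ξξ_x)p − θ_t − 2θξ_x)·f(p) + (−ξ_xx p + θ_xx)·f(p)², and (η¹p + η²)(η¹_x p + η²_x)·f'(p) − ((η¹_t − 2η¹η¹_x)p + η²_t − 2η²η¹_x)·f(p) + (η¹_xx p + η²_xx)·f(p)². Consequently the determining equation for reduction operators Q = ∂_t + ξ∂_x + θ∂_v of the filtration equation v_t = f(v_x)v_xx and the determining equation for reduction operators Q' = ∂_x + ((−ξu + θ)/f(u))∂_u of the diffusion equation u_t = (f(u)u_x)_x coincide under the identification η¹ = −ξ, η² = θ. -/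
import Mathlib


/-- Partial derivative with respect to the first variable (time). -/
noncomputable def pt (u : ℝ × ℝ → ℝ) (p : ℝ × ℝ) : ℝ :=
  deriv (fun s => u (s, p.2)) p.1

/-- Partial derivative with respect to the second variable (space). -/
noncomputable def px (u : ℝ × ℝ → ℝ) (p : ℝ × ℝ) : ℝ :=
  deriv (fun y => u (p.1, y)) p.2

/-- Under the identification `η¹ = −ξ`, `η² = θ`, the determining equation for reduction
operators `Q = ∂_t + ξ∂_x + θ∂_v` of the filtration equation `v_t = f(v_x)v_xx` coincides
with the determining equation for reduction operators
`Q' = ∂_x + ((η¹u + η²)/f(u))∂_u` of the diffusion equation `u_t = (f(u)u_x)_x`. -/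
theorem determining_equations_coincide
    (f : ℝ → ℝ) (hf : Differentiable ℝ f)
    (Ω : Set (ℝ × ℝ)) (hΩ : IsOpen Ω)
    (ξ θ : ℝ × ℝ → ℝ)
    (hξ : ContDiffOn ℝ 2 ξ Ω) (hθ : ContDiffOn ℝ 2 θ Ω)
    (η₁ η₂ : ℝ × ℝ → ℝ)
    (hη₁ : η₁ = fun q => -ξ q) (hη₂ : η₂ = θ) :
    ∀ p ∈ Ω, ∀ r : ℝ,
      (ξ p * px ξ p * r ^ 2 - (px ξ p * θ p + ξ p * px θ p) * r + θ p * px θ p)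
          * deriv f r
        + ((pt ξ p + 2 * ξ p * px ξ p) * r - pt θ p - 2 * θ p * px ξ p) * f r
        + (-(px (px ξ) p) * r + px (px θ) p) * (f r) ^ 2
      =
      (η₁ p * r + η₂ p) * (px η₁ p * r + px η₂ p) * deriv f r
        - ((pt η₁ p - 2 * η₁ p * px η₁ p) * r + pt η₂ p - 2 * η₂ p * px η₁ p) * f r
        + (px (px η₁) p * r + px (px η₂) p) * (f r) ^ 2 := by
  subst hη₁ hη₂
  have hpx : px (fun q => -ξ q) = fun p => -px ξ p := by
    funext p; simp [px, deriv.neg]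
  have hpt : pt (fun q => -ξ q) = fun p => -pt ξ p := by
    funext p; simp [pt, deriv.neg]
  intro p hp r
  rw [hpx, hpt]
  have hpx2 : px (fun p => -px ξ p) p = -px (px ξ) p := by
    simp [px, deriv.neg]
  rw [hpx2]
  ring
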